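/- For every finite graph G with lw(G) ≥ 1, pw(G) ≤ lw(G) ≤ pw(G) + 1, i.e., the pathwidth and linearwidth differ by at most one whenever the linearwidth is positive. -/

import Mathlib

variable {V : Type*} [Fintype V] [DecidableEq V]

/-- `Vs F` is the set of endpoints of edges in `F`. -/
def Vs (F : Finset (Sym2 V)) : Finset V :=
  Finset.univ.filter (fun v => ∃ e ∈ F, v ∈ e)

/-- The set of endpoints of a single edge. -/
def eset (e : Sym2 V) : Finset V := Finset.univ.filter (fun v => v ∈ e)

/-- `mids E F` is mid(F) = V(F) ∩ V(E \ F), relative to the edge set `E`. -/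
def mids (E F : Finset (Sym2 V)) : Finset V := Vs F ∩ Vs (E \ F)

/-- `dd E F` is d(F) = |mid(F)|, relative to the edge set `E`. -/
def dd (E F : Finset (Sym2 V)) : ℕ := (mids E F).card

/-- A layout of the edge set `E`: a duplicate-free list enumerating `E`
(equivalently, a bijection {1,…,m} → E). -/
def IsLayout (E : Finset (Sym2 V)) (L : List (Sym2 V)) : Prop :=
  L.Nodup ∧ L.toFinset = E

/-- The (partial) layout `L` has width at most `k` w.r.t. the edge set `E`:
every prefix `π_{≤ i}` satisfies d(π_{≤ i}) ≤ k. -/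
def WidthLE (E : Finset (Sym2 V)) (L : List (Sym2 V)) (k : ℕ) : Prop :=
  ∀ i, dd E (L.take i).toFinset ≤ k

/-- The linearwidth of the edge set `E`: the minimum width of a layout of `E`. -/
noncomputable def lw (E : Finset (Sym2 V)) : ℕ :=
  sInf {k | ∃ L, IsLayout E L ∧ WidthLE E L k}

/-- The number of edges of `S` incident to `u`. -/
def degIn (S : Finset (Sym2 V)) (u : V) : ℕ := (S.filter (fun e => u ∈ e)).card

/-- `X` is a path decomposition of `G`, given as a list of bags. -/
def IsPD (G : SimpleGraph V) (X : List (Finset V)) : Prop :=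
  (∀ v : V, ∃ B ∈ X, v ∈ B) ∧
  (∀ e ∈ G.edgeSet, ∃ B ∈ X, eset e ⊆ B) ∧
  (∀ v : V, ∀ i j l : ℕ, i ≤ j → j ≤ l → l < X.length →
    v ∈ X.getD i ∅ → v ∈ X.getD l ∅ → v ∈ X.getD j ∅)

/-- The pathwidth of `G`: the minimum over path decompositions of (max bag size) − 1. -/
noncomputable def pw (G : SimpleGraph V) : ℕ :=
  sInf {k | ∃ X, IsPD G X ∧ ∀ B ∈ X, B.card ≤ k + 1}

/-- The closure F* of `F` in `E`: all edges of `E` with both endpoints in `V(F)`. -/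
def cl (E F : Finset (Sym2 V)) : Finset (Sym2 V) := E.filter (fun e => eset e ⊆ Vs F)

/-- A partial layout `S` is `k`-extendable: it is a prefix of some layout
of `E` of width at most `k`. -/
def Extendable (E : Finset (Sym2 V)) (k : ℕ) (S : List (Sym2 V)) : Prop :=
  ∃ L, IsLayout E L ∧ WidthLE E L k ∧ S <+: L

/-!
Given a path decomposition with bags of size at most `p + 1`, list the edges by the first bag
containing them: every vertex of `mid(π_{≤ i})` lies on an earlier and on a later edge, so by the
interval property it lies in the bag of the last edge placed so far, and the width is at most
`p + 1`.

Conversely, a layout `e₁, …, e_m` of width `k` is swept into the bags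
`V(π_{≤ i}) ∩ V(π_{≥ i}) = mid(π_{< i}) ∪ eᵢ`, which have the interval property for free. If `eᵢ`
shares an endpoint with another edge, that endpoint already lies in `mid(π_{< i})` or in
`mid(π_{≤ i})`, so the bag has at most `k + 1` vertices. Isolated edges and isolated vertices are
put in front in bags of their own, of size at most `2 ≤ k + 1`.
-/

theorem List.getElem_mem_take_of_lt {α : Type*} {l : List α} {i j : ℕ} (hj : j < l.length)
    (h : j < i) : l[j] ∈ l.take i :=
  List.mem_take_iff_getElem.mpr ⟨j, by omega, rfl⟩

theorem List.getElem_mem_drop_of_le {α : Type*} {l : List α} {i j : ℕ} (hj : j < l.length)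
    (h : i ≤ j) : l[j] ∈ l.drop i :=
  List.mem_drop_iff_getElem.mpr ⟨j - i, by omega, by congr 1; omega⟩

lemma mem_Vs {F : Finset (Sym2 V)} {v : V} : v ∈ Vs F ↔ ∃ e ∈ F, v ∈ e := by simp [Vs]

lemma mem_eset {e : Sym2 V} {v : V} : v ∈ eset e ↔ v ∈ e := by simp [eset]

lemma mem_mids {E F : Finset (Sym2 V)} {v : V} :
    v ∈ mids E F ↔ (∃ e ∈ F, v ∈ e) ∧ ∃ f ∈ E \ F, v ∈ f := by
  simp [mids, mem_Vs]

lemma mids_empty (E : Finset (Sym2 V)) : mids E ∅ = ∅ := by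
  ext; simp [mem_mids]

lemma card_eset_le_two (e : Sym2 V) : (eset e).card ≤ 2 := by
  induction e using Sym2.ind with
  | _ x y =>
    have : eset s(x, y) = {x, y} := by ext; simp [mem_eset]
    exact this ▸ Finset.card_le_two

lemma isLayout_toList {α : Type*} [DecidableEq α] (E : Finset (Sym2 α)) : IsLayout E E.toList :=
  ⟨E.nodup_toList, E.toList_toFinset⟩

lemma IsLayout.perm {α : Type*} [DecidableEq α] {E : Finset (Sym2 α)} {L L' : List (Sym2 α)}
    (hL : IsLayout E L) (h : L'.Perm L) : IsLayout E L' :=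
  ⟨h.nodup_iff.mpr hL.1, by ext; simp [h.mem_iff, ← hL.2]⟩

lemma exists_layout_widthLE_lw (E : Finset (Sym2 V)) :
    ∃ L, IsLayout E L ∧ WidthLE E L (lw E) :=
  Nat.sInf_mem (s := {k | ∃ L, IsLayout E L ∧ WidthLE E L k})
    ⟨Fintype.card V, E.toList, isLayout_toList E, fun _ => Finset.card_le_univ _⟩

lemma exists_isPD_card_le_pw_add_one (G : SimpleGraph V) :
    ∃ X, IsPD G X ∧ ∀ B ∈ X, B.card ≤ pw G + 1 := by
  apply Nat.sInf_mem (s := {k | ∃ X, IsPD G X ∧ ∀ B ∈ X, B.card ≤ k + 1})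
  refine ⟨Fintype.card V, [Finset.univ], ⟨fun v => ⟨Finset.univ, by simp⟩,
    fun e _ => ⟨Finset.univ, by simp⟩, fun v i j l hij hjl hl hi _ => ?_⟩, by simp⟩
  obtain rfl : j = 0 := by rw [List.length_singleton] at hl; omega
  obtain rfl : i = 0 := by omega
  exact hi

def ConsecutiveBags {α : Type*} (X : List (Finset α)) : Prop :=
  ∀ v i j l, i ≤ j → j ≤ l → l < X.length → v ∈ X.getD i ∅ → v ∈ X.getD l ∅ → v ∈ X.getD j ∅

lemma card_getD_le {α : Type*} {X : List (Finset α)} {n : ℕ} (h : ∀ B ∈ X, B.card ≤ n)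
    (b : ℕ) : (X.getD b ∅).card ≤ n := by
  rw [List.getD_eq_getElem?_getD]
  cases hb : X[b]? with
  | none => simp
  | some B => exact h B (List.mem_of_getElem? hb)

lemma mids_take_subset_getD {E : Finset (Sym2 V)} {X : List (Finset V)}
    (hX : ConsecutiveBags X) {key : Sym2 V → ℕ}
    (hkey : ∀ e ∈ E, key e < X.length ∧ eset e ⊆ X.getD (key e) ∅) {L : List (Sym2 V)}
    (hL : IsLayout E L) (hsorted : L.Pairwise (fun a b => key a ≤ key b)) (i : ℕ) :
    mids E (L.take i).toFinset ⊆ X.getD ((L.take i).toFinset.sup key) ∅ := by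
  intro v hv
  obtain ⟨⟨e, he, hve⟩, f, hf, hvf⟩ := mem_mids.mp hv
  obtain ⟨hfE, hfi⟩ := Finset.mem_sdiff.mp hf
  have hfdrop : f ∈ L.drop i := by
    rw [← hL.2, List.mem_toFinset, ← List.take_append_drop i L, List.mem_append] at hfE
    exact hfE.resolve_left (fun h => hfi (List.mem_toFinset.mpr h))
  have hle : ∀ a ∈ L.take i, ∀ b ∈ L.drop i, key a ≤ key b := by
    rw [← List.take_append_drop i L] at hsorted
    exact (List.pairwise_append.mp hsorted).2.2
  have heE : e ∈ E := hL.2 ▸ List.mem_toFinset.mpr (List.mem_of_mem_take (List.mem_toFinset.mp he))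
  -- the largest key in the prefix lies between the keys of the two edges through `v`
  exact hX v (key e) _ (key f) (Finset.le_sup he)
    (Finset.sup_le fun a ha => hle a (List.mem_toFinset.mp ha) f hfdrop) (hkey f hfE).1
    ((hkey e heE).2 (mem_eset.mpr hve)) ((hkey f hfE).2 (mem_eset.mpr hvf))

lemma lw_le_of_isPD {G : SimpleGraph V} [DecidableRel G.Adj] {X : List (Finset V)}
    (hX : IsPD G X) {n : ℕ} (hcard : ∀ B ∈ X, B.card ≤ n) : lw G.edgeFinset ≤ n := by
  have hkey : ∀ e ∈ G.edgeFinset, ∃ b, b < X.length ∧ eset e ⊆ X.getD b ∅ := by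
    intro e he
    obtain ⟨B, hB, heB⟩ := hX.2.1 e (SimpleGraph.mem_edgeFinset.mp he)
    obtain ⟨b, hb, rfl⟩ := List.mem_iff_getElem.mp hB
    exact ⟨b, hb, by rwa [List.getD_eq_getElem _ _ hb]⟩
  choose! key hkey using hkey
  let L := G.edgeFinset.toList.mergeSort (fun a b => key a ≤ key b)
  have hL : IsLayout G.edgeFinset L := (isLayout_toList _).perm (List.mergeSort_perm _ _)
  have hsorted : L.Pairwise (fun a b => key a ≤ key b) := by
    simpa using List.pairwise_mergeSort (le := fun a b => key a ≤ key b)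
      (by simpa using fun _ _ _ => le_trans) (by simpa using fun a b => le_total (key a) (key b)) _
  exact Nat.sInf_le ⟨L, hL, fun i => (Finset.card_le_card
    (mids_take_subset_getD hX.2.2 hkey hL hsorted i)).trans (card_getD_le hcard _)⟩

def unionOf (T : List (Finset V)) : Finset V := Finset.univ.filter fun v => ∃ s ∈ T, v ∈ s

lemma mem_unionOf {T : List (Finset V)} {v : V} : v ∈ unionOf T ↔ ∃ s ∈ T, v ∈ s := by
  simp [unionOf]

lemma unionOf_mono {T T' : List (Finset V)} (h : T.Sublist T') : unionOf T ⊆ unionOf T' :=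
  fun _ hv => mem_unionOf.mpr <| (mem_unionOf.mp hv).imp fun _ hs => ⟨h.subset hs.1, hs.2⟩

def sweepBag (T : List (Finset V)) (i : ℕ) : Finset V :=
  unionOf (T.take (i + 1)) ∩ unionOf (T.drop i)

def sweepBags (T : List (Finset V)) : List (Finset V) := (List.range T.length).map (sweepBag T)

def sweepMid (T : List (Finset V)) (i : ℕ) : Finset V :=
  unionOf (T.take i) ∩ unionOf (T.drop i)

lemma getD_sweepBags (T : List (Finset V)) (i : ℕ) : (sweepBags T).getD i ∅ = sweepBag T i := by
  by_cases hi : i < T.length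
  · simp [sweepBags, List.getD_eq_getElem?_getD, hi]
  · have : T.drop i = [] := List.drop_eq_nil_of_le (by omega)
    simp [sweepBags, sweepBag, List.getD_eq_getElem?_getD, hi, this, unionOf]

lemma consecutiveBags_sweepBags (T : List (Finset V)) : ConsecutiveBags (sweepBags T) := by
  intro v i j l hij hjl _ hvi hvl
  rw [getD_sweepBags, sweepBag, Finset.mem_inter] at *
  exact ⟨unionOf_mono (List.take_sublist_take_left (by omega)) hvi.1,
    unionOf_mono (List.drop_sublist_drop_left T hjl) hvl.2⟩

lemma getElem_subset_sweepBag (T : List (Finset V)) {i : ℕ} (hi : i < T.length) :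
    T[i] ⊆ sweepBag T i := fun v hv =>
  Finset.mem_inter.mpr ⟨mem_unionOf.mpr ⟨T[i], List.getElem_mem_take_of_lt hi (by omega), hv⟩,
    mem_unionOf.mpr ⟨T[i], List.getElem_mem_drop_of_le hi le_rfl, hv⟩⟩

lemma exists_mem_sweepBags_superset {T : List (Finset V)} {s : Finset V} (hs : s ∈ T) :
    ∃ B ∈ sweepBags T, s ⊆ B := by
  obtain ⟨i, hi, rfl⟩ := List.mem_iff_getElem.mp hs
  exact ⟨sweepBag T i, List.mem_map.mpr ⟨i, List.mem_range.mpr hi, rfl⟩,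
    getElem_subset_sweepBag T hi⟩

lemma isPD_sweepBags {G : SimpleGraph V} {T : List (Finset V)} (hv : ∀ v, ∃ s ∈ T, v ∈ s)
    (he : ∀ e ∈ G.edgeSet, ∃ s ∈ T, eset e ⊆ s) : IsPD G (sweepBags T) := by
  refine ⟨fun v => ?_, fun e he' => ?_, consecutiveBags_sweepBags T⟩
  · obtain ⟨s, hs, hvs⟩ := hv v
    obtain ⟨B, hB, hsB⟩ := exists_mem_sweepBags_superset hs
    exact ⟨B, hB, hsB hvs⟩
  · obtain ⟨s, hs, hes⟩ := he e he'
    obtain ⟨B, hB, hsB⟩ := exists_mem_sweepBags_superset hs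
    exact ⟨B, hB, hes.trans hsB⟩

lemma sweepBag_subset_sweepMid_union (T : List (Finset V)) {i : ℕ} (hi : i < T.length) :
    sweepBag T i ⊆ sweepMid T i ∪ T[i] := by
  intro v hv
  obtain ⟨hv₁, hv₂⟩ := Finset.mem_inter.mp hv
  obtain ⟨s, hs, hvs⟩ := mem_unionOf.mp hv₁
  rw [List.take_succ_eq_append_getElem hi, List.mem_append, List.mem_singleton] at hs
  rcases hs with hs | rfl
  · exact Finset.mem_union_left _ (Finset.mem_inter.mpr ⟨mem_unionOf.mpr ⟨s, hs, hvs⟩, hv₂⟩)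
  · exact Finset.mem_union_right _ hvs

lemma sweepBag_subset_sweepMid_succ_union (T : List (Finset V)) {i : ℕ} (hi : i < T.length) :
    sweepBag T i ⊆ sweepMid T (i + 1) ∪ T[i] := by
  intro v hv
  obtain ⟨hv₁, hv₂⟩ := Finset.mem_inter.mp hv
  obtain ⟨s, hs, hvs⟩ := mem_unionOf.mp hv₂
  rw [List.drop_eq_getElem_cons hi, List.mem_cons] at hs
  rcases hs with rfl | hs
  · exact Finset.mem_union_right _ hvs
  · exact Finset.mem_union_left _ (Finset.mem_inter.mpr ⟨hv₁, mem_unionOf.mpr ⟨s, hs, hvs⟩⟩)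

lemma mem_sweepMid_or_mem_sweepMid_succ {T : List (Finset V)} {i j : ℕ} (hi : i < T.length)
    (hj : j < T.length) (hij : i ≠ j) {u : V} (hui : u ∈ T[i]) (huj : u ∈ T[j]) :
    u ∈ sweepMid T i ∨ u ∈ sweepMid T (i + 1) := by
  rcases Nat.lt_or_gt_of_ne hij with h | h
  · exact Or.inr (Finset.mem_inter.mpr
      ⟨mem_unionOf.mpr ⟨T[i], List.getElem_mem_take_of_lt hi (by omega), hui⟩,
        mem_unionOf.mpr ⟨T[j], List.getElem_mem_drop_of_le hj h, huj⟩⟩)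
  · exact Or.inl (Finset.mem_inter.mpr
      ⟨mem_unionOf.mpr ⟨T[j], List.getElem_mem_take_of_lt hj h, huj⟩,
        mem_unionOf.mpr ⟨T[i], List.getElem_mem_drop_of_le hi le_rfl, hui⟩⟩)

lemma card_union_le_of_mem {α : Type*} [DecidableEq α] {s t : Finset α} {u : α} (hs : u ∈ s)
    (ht : u ∈ t) (h2 : t.card ≤ 2) : (s ∪ t).card ≤ s.card + 1 := by
  have := Finset.card_union_add_card_inter s t
  have : 1 ≤ (s ∩ t).card := Finset.card_pos.mpr ⟨u, Finset.mem_inter.mpr ⟨hs, ht⟩⟩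
  omega

lemma card_sweepBag_le_of_mem {T : List (Finset V)} {k : ℕ}
    (hmid : ∀ j, (sweepMid T j).card ≤ k) {i j : ℕ} (hi : i < T.length) (hj : j < T.length)
    (hij : i ≠ j) (h2 : T[i].card ≤ 2) {u : V} (hui : u ∈ T[i]) (huj : u ∈ T[j]) :
    (sweepBag T i).card ≤ k + 1 := by
  rcases mem_sweepMid_or_mem_sweepMid_succ hi hj hij hui huj with hu | hu
  · calc (sweepBag T i).card ≤ (sweepMid T i ∪ T[i]).card :=
          Finset.card_le_card (sweepBag_subset_sweepMid_union T hi)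
      _ ≤ k + 1 := (card_union_le_of_mem hu hui h2).trans (by simpa using hmid i)
  · calc (sweepBag T i).card ≤ (sweepMid T (i + 1) ∪ T[i]).card :=
          Finset.card_le_card (sweepBag_subset_sweepMid_succ_union T hi)
      _ ≤ k + 1 := (card_union_le_of_mem hu hui h2).trans (by simpa using hmid (i + 1))

lemma sweepMid_append_subset {I J : List (Finset V)} (hI : I.Pairwise Disjoint)
    (hIJ : ∀ s ∈ I, ∀ t ∈ J, Disjoint s t) (i : ℕ) :
    sweepMid (I ++ J) i ⊆ sweepMid J (i - I.length) := by
  intro v hv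
  obtain ⟨hv₁, hv₂⟩ := Finset.mem_inter.mp hv
  obtain ⟨s, hs, hvs⟩ := mem_unionOf.mp hv₁
  obtain ⟨t, ht, hvt⟩ := mem_unionOf.mp hv₂
  have hst : ¬ Disjoint s t := Finset.not_disjoint_iff.mpr ⟨v, hvs, hvt⟩
  rw [List.take_append, List.mem_append] at hs
  rw [List.drop_append, List.mem_append] at ht
  rcases hs with hs | hs <;> rcases ht with ht | ht
  · rw [← List.take_append_drop i I] at hI
    exact absurd ((List.pairwise_append.mp hI).2.2 s hs t ht) hst
  · exact absurd (hIJ s (List.mem_of_mem_take hs) t (List.mem_of_mem_drop ht)) hst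
  · exact absurd (hIJ t (List.mem_of_mem_drop ht) s (List.mem_of_mem_take hs)).symm hst
  · exact Finset.mem_inter.mpr ⟨mem_unionOf.mpr ⟨s, hs, hvs⟩, mem_unionOf.mpr ⟨t, ht, hvt⟩⟩

lemma sweepMid_map_subset_mids {E : Finset (Sym2 V)} {L : List (Sym2 V)} (hL : IsLayout E L)
    {p : Sym2 V → Finset V} (hp : ∀ e, p e ⊆ eset e) (m : ℕ) :
    sweepMid (L.map p) m ⊆ mids E (L.take m).toFinset := by
  intro v hv
  obtain ⟨hv₁, hv₂⟩ := Finset.mem_inter.mp hv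
  obtain ⟨s, hs, hvs⟩ := mem_unionOf.mp hv₁
  obtain ⟨t, ht, hvt⟩ := mem_unionOf.mp hv₂
  rw [← List.map_take] at hs
  rw [← List.map_drop] at ht
  obtain ⟨e, he, rfl⟩ := List.mem_map.mp hs
  obtain ⟨f, hf, rfl⟩ := List.mem_map.mp ht
  have hfE : f ∈ E := hL.2 ▸ List.mem_toFinset.mpr (List.mem_of_mem_drop hf)
  have hfe : f ∉ (L.take m).toFinset := fun h =>
    List.disjoint_take_drop hL.1 le_rfl (List.mem_toFinset.mp h) hf
  exact mem_mids.mpr ⟨⟨e, List.mem_toFinset.mpr he, mem_eset.mp (hp e hvs)⟩,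
    f, Finset.mem_sdiff.mpr ⟨hfE, hfe⟩, mem_eset.mp (hp f hvt)⟩

def SharesVertex {α : Type*} (E : Finset (Sym2 α)) (e : Sym2 α) : Prop :=
  ∃ f ∈ E, f ≠ e ∧ ∃ v ∈ e, v ∈ f

instance (E : Finset (Sym2 V)) : DecidablePred (SharesVertex E) := fun _ => by
  unfold SharesVertex; infer_instance

lemma SharesVertex.of_mem {α : Type*} {E : Finset (Sym2 α)} {e f : Sym2 α} (hf : f ∈ E)
    (hne : f ≠ e) {v : α} (hve : v ∈ e) (hvf : v ∈ f) : SharesVertex E e :=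
  ⟨f, hf, hne, v, hve, hvf⟩

def corePiece (E : Finset (Sym2 V)) (e : Sym2 V) : Finset V :=
  if SharesVertex E e then eset e else ∅

noncomputable def isolatedPieces (E : Finset (Sym2 V)) : List (Finset V) :=
  (E.filter fun e => ¬ SharesVertex E e).toList.map eset ++
    (Finset.univ \ Vs E).toList.map singleton

/-- An isolated edge met inside the sweep would add two fresh vertices to a `mid`, so isolated
edges get bags of their own in front, where every `mid` is empty, and are blanked out in `L`. -/
noncomputable def layoutPieces (E : Finset (Sym2 V)) (L : List (Sym2 V)) : List (Finset V) :=
  isolatedPieces E ++ L.map (corePiece E)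

lemma pairwise_disjoint_isolatedPieces (E : Finset (Sym2 V)) :
    (isolatedPieces E).Pairwise Disjoint := by
  refine List.pairwise_append.mpr ⟨?_, ?_, ?_⟩
  · refine List.pairwise_map.mpr (List.Nodup.pairwise_of_forall_ne (Finset.nodup_toList _) ?_)
    intro a ha b hb hab
    simp only [Finset.mem_toList, Finset.mem_filter] at ha hb
    refine Finset.disjoint_left.mpr fun v hva hvb => ha.2 ?_
    exact SharesVertex.of_mem hb.1 (Ne.symm hab) (mem_eset.mp hva) (mem_eset.mp hvb)
  · refine List.pairwise_map.mpr (List.Nodup.pairwise_of_forall_ne (Finset.nodup_toList _) ?_)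
    exact fun v _ w _ hvw => Finset.disjoint_singleton.mpr hvw
  · simp only [List.mem_map, Finset.mem_toList, Finset.mem_filter, Finset.mem_sdiff]
    rintro _ ⟨a, ⟨ha, -⟩, rfl⟩ _ ⟨w, ⟨-, hw⟩, rfl⟩
    exact Finset.disjoint_singleton_right.mpr fun hwa => hw (mem_Vs.mpr ⟨a, ha, mem_eset.mp hwa⟩)

lemma disjoint_isolatedPieces_corePiece {E : Finset (Sym2 V)} {s : Finset V}
    (hs : s ∈ isolatedPieces E) {e : Sym2 V} (he : e ∈ E) : Disjoint s (corePiece E e) := by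
  unfold corePiece
  split_ifs with hshare
  · simp only [isolatedPieces, List.mem_append, List.mem_map, Finset.mem_toList,
      Finset.mem_filter, Finset.mem_sdiff] at hs
    rcases hs with ⟨a, ⟨ha, hiso⟩, rfl⟩ | ⟨w, ⟨-, hw⟩, rfl⟩
    · refine Finset.disjoint_left.mpr fun v hva hve => hiso (SharesVertex.of_mem he ?_
        (mem_eset.mp hva) (mem_eset.mp hve))
      rintro rfl
      exact hiso hshare
    · exact Finset.disjoint_singleton_left.mpr fun hwe => hw (mem_Vs.mpr ⟨e, he, mem_eset.mp hwe⟩)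
  · exact Finset.disjoint_empty_right s

lemma sweepMid_layoutPieces_subset {E : Finset (Sym2 V)} {L : List (Sym2 V)}
    (hL : IsLayout E L) (i : ℕ) :
    sweepMid (layoutPieces E L) i ⊆ mids E (L.take (i - (isolatedPieces E).length)).toFinset := by
  have hIJ : ∀ s ∈ isolatedPieces E, ∀ t ∈ L.map (corePiece E), Disjoint s t := by
    intro s hs t ht
    obtain ⟨e, he, rfl⟩ := List.mem_map.mp ht
    exact disjoint_isolatedPieces_corePiece hs (hL.2 ▸ List.mem_toFinset.mpr he)
  have hcore : ∀ e, corePiece E e ⊆ eset e := fun e => by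
    unfold corePiece; split_ifs <;> simp
  exact (sweepMid_append_subset (pairwise_disjoint_isolatedPieces E) hIJ i).trans
    (sweepMid_map_subset_mids hL hcore _)

lemma card_le_two_of_mem_layoutPieces {E : Finset (Sym2 V)} {L : List (Sym2 V)} {s : Finset V}
    (hs : s ∈ layoutPieces E L) : s.card ≤ 2 := by
  simp only [layoutPieces, isolatedPieces, List.mem_append, List.mem_map] at hs
  rcases hs with (⟨a, -, rfl⟩ | ⟨w, -, rfl⟩) | ⟨e, -, rfl⟩
  · exact card_eset_le_two a
  · simp
  · unfold corePiece
    split_ifs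
    exacts [card_eset_le_two e, by simp]

lemma length_layoutPieces (E : Finset (Sym2 V)) (L : List (Sym2 V)) :
    (layoutPieces E L).length = (isolatedPieces E).length + L.length := by
  simp [layoutPieces]

lemma getElem_layoutPieces_add (E : Finset (Sym2 V)) (L : List (Sym2 V)) {m : ℕ}
    (hm : m < L.length) :
    (layoutPieces E L)[(isolatedPieces E).length + m]'(by rw [length_layoutPieces]; omega) =
      corePiece E L[m] := by
  simp [layoutPieces, List.getElem_append_right]

lemma exists_mem_layoutPieces_superset {E : Finset (Sym2 V)} {L : List (Sym2 V)}
    (hL : IsLayout E L) {e : Sym2 V} (he : e ∈ E) : ∃ s ∈ layoutPieces E L, eset e ⊆ s := by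
  by_cases hshare : SharesVertex E e
  · refine ⟨corePiece E e, List.mem_append_right _ (List.mem_map_of_mem ?_), by
      simp [corePiece, hshare]⟩
    exact List.mem_toFinset.mp (hL.2 ▸ he)
  · exact ⟨eset e, List.mem_append_left _ (List.mem_append_left _
      (List.mem_map_of_mem (by simp [he, hshare]))), subset_rfl⟩

lemma exists_mem_layoutPieces_mem {E : Finset (Sym2 V)} {L : List (Sym2 V)}
    (hL : IsLayout E L) (v : V) : ∃ s ∈ layoutPieces E L, v ∈ s := by
  by_cases hv : v ∈ Vs E
  · obtain ⟨e, he, hve⟩ := mem_Vs.mp hv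
    obtain ⟨s, hs, hes⟩ := exists_mem_layoutPieces_superset hL he
    exact ⟨s, hs, hes (mem_eset.mpr hve)⟩
  · exact ⟨{v}, List.mem_append_left _ (List.mem_append_right _
      (List.mem_map_of_mem (by simp [hv]))), Finset.mem_singleton_self v⟩

lemma sweepMid_layoutPieces_eq_empty {E : Finset (Sym2 V)} {L : List (Sym2 V)}
    (hL : IsLayout E L) {i : ℕ} (hi : i ≤ (isolatedPieces E).length) :
    sweepMid (layoutPieces E L) i = ∅ := by
  have := sweepMid_layoutPieces_subset hL i
  rwa [Nat.sub_eq_zero_of_le hi, List.take_zero, List.toFinset_nil, mids_empty,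
    Finset.subset_empty] at this

lemma card_sweepMid_layoutPieces_le {E : Finset (Sym2 V)} {L : List (Sym2 V)}
    (hL : IsLayout E L) {k : ℕ} (hW : WidthLE E L k) (i : ℕ) :
    (sweepMid (layoutPieces E L) i).card ≤ k :=
  (Finset.card_le_card (sweepMid_layoutPieces_subset hL i)).trans (hW _)

lemma card_sweepBag_layoutPieces_add_le {E : Finset (Sym2 V)} {L : List (Sym2 V)}
    (hL : IsLayout E L) {k : ℕ} (hW : WidthLE E L k) {m : ℕ} (hm : m < L.length) :
    (sweepBag (layoutPieces E L) ((isolatedPieces E).length + m)).card ≤ k + 1 := by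
  have hlen := length_layoutPieces E L
  have hi : (isolatedPieces E).length + m < (layoutPieces E L).length := by omega
  have hTi := getElem_layoutPieces_add E L hm
  have heE : L[m] ∈ E := hL.2 ▸ List.mem_toFinset.mpr (List.getElem_mem hm)
  by_cases hshare : SharesVertex E L[m]
  · obtain ⟨f, hf, hfe, u, hue, huf⟩ := hshare
    obtain ⟨m', hm', rfl⟩ := List.mem_iff_getElem.mp (List.mem_toFinset.mp (hL.2 ▸ hf))
    have hmm' : m ≠ m' := fun h => hfe (by simp [h])
    refine card_sweepBag_le_of_mem (card_sweepMid_layoutPieces_le hL hW) hi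
      (j := (isolatedPieces E).length + m') (by omega) (by omega)
      (card_le_two_of_mem_layoutPieces (List.getElem_mem hi)) (u := u) ?_ ?_
    · rw [hTi, corePiece, if_pos ⟨_, hf, hfe, u, hue, huf⟩]
      exact mem_eset.mpr hue
    · rw [getElem_layoutPieces_add E L hm', corePiece,
        if_pos (SharesVertex.of_mem heE (Ne.symm hfe) huf hue)]
      exact mem_eset.mpr huf
  · have hbag := Finset.card_le_card (sweepBag_subset_sweepMid_union _ hi)
    rw [hTi, corePiece, if_neg hshare, Finset.union_empty] at hbag
    exact hbag.trans ((card_sweepMid_layoutPieces_le hL hW _).trans (Nat.le_succ k))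

lemma card_sweepBag_layoutPieces_le {E : Finset (Sym2 V)} {L : List (Sym2 V)}
    (hL : IsLayout E L) {k : ℕ} (hk : 1 ≤ k) (hW : WidthLE E L k) :
    ∀ B ∈ sweepBags (layoutPieces E L), B.card ≤ k + 1 := by
  intro B hB
  obtain ⟨i, hi, rfl⟩ := List.mem_map.mp hB
  rw [List.mem_range] at hi
  by_cases hin : i < (isolatedPieces E).length
  · have hbag := Finset.card_le_card (sweepBag_subset_sweepMid_union _ hi)
    rw [sweepMid_layoutPieces_eq_empty hL hin.le, Finset.empty_union] at hbag
    have := card_le_two_of_mem_layoutPieces (List.getElem_mem hi)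
    omega
  · obtain ⟨m, rfl⟩ : ∃ m, i = (isolatedPieces E).length + m :=
      ⟨_, (Nat.add_sub_of_le (not_lt.mp hin)).symm⟩
    exact card_sweepBag_layoutPieces_add_le hL hW (by rw [length_layoutPieces] at hi; omega)

lemma pw_le_lw (G : SimpleGraph V) [DecidableRel G.Adj] (h : 1 ≤ lw G.edgeFinset) :
    pw G ≤ lw G.edgeFinset := by
  obtain ⟨L, hL, hW⟩ := exists_layout_widthLE_lw G.edgeFinset
  refine Nat.sInf_le ⟨sweepBags (layoutPieces G.edgeFinset L), isPD_sweepBags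
    (exists_mem_layoutPieces_mem hL) (fun e he => ?_), card_sweepBag_layoutPieces_le hL h hW⟩
  exact exists_mem_layoutPieces_superset hL (SimpleGraph.mem_edgeFinset.mpr he)

/-- For every graph with lw(G) ≥ 1, pw(G) ≤ lw(G) ≤ pw(G) + 1. -/
theorem stmt8 (G : SimpleGraph V) [DecidableRel G.Adj]
    (h : 1 ≤ lw G.edgeFinset) :
    pw G ≤ lw G.edgeFinset ∧ lw G.edgeFinset ≤ pw G + 1 := by
  obtain ⟨X, hX, hcard⟩ := exists_isPD_card_le_pw_add_one G
  exact ⟨pw_le_lw G h, lw_le_of_isPD hX hcard⟩
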